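/- arXiv:2208.12357 — 5 statements merged into one kernel-verified Lean document; each statement's English description precedes it below -/
import Mathlib

section
/- Let A be an invertible m×m real matrix, A_s a p×p real matrix, G a p×m real matrix, B a q×p real matrix, and suppose S₁ = A_s + G A⁻¹ Gᵀ and S₂ = B S₁⁻¹ Bᵀ are invertible. Define M₃ = [[A, 0, 0], [G, −S₁, 0], [0, B, S₂]]. If A⁻¹ Gᵀ S₁⁻¹ Bᵀ ≠ 0, then (M₃⁻¹K − I)² ≠ 0 while (M₃⁻¹K − I)³ = 0; that is, the minimal polynomial of M₃⁻¹K is (z − 1)³. -/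
open Matrix Polynomial

/-- Assemble a 3×3 block matrix from its nine blocks. -/
noncomputable def blk3 {m p q : Type*}
    (M11 : Matrix m m ℝ) (M12 : Matrix m p ℝ) (M13 : Matrix m q ℝ)
    (M21 : Matrix p m ℝ) (M22 : Matrix p p ℝ) (M23 : Matrix p q ℝ)
    (M31 : Matrix q m ℝ) (M32 : Matrix q p ℝ) (M33 : Matrix q q ℝ) :
    Matrix (m ⊕ (p ⊕ q)) (m ⊕ (p ⊕ q)) ℝ :=
  Matrix.fromBlocks M11 (Matrix.fromCols M12 M13)
    (Matrix.fromRows M21 M31) (Matrix.fromBlocks M22 M23 M32 M33)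

/-!
`K` factors as `M₃ U` with `U` block upper unitriangular, with off-diagonal blocks `A⁻¹ Gᵀ` and
`-S₁⁻¹ Bᵀ`; the Schur complements on the diagonal of `M₃` are exactly what makes this work.
Hence `M₃⁻¹ K - I = U - I` is strictly block upper triangular with three block rows, so its cube
vanishes and its square has the single nonzero block `-A⁻¹ Gᵀ S₁⁻¹ Bᵀ` in the corner. A
unipotent element whose nilpotent part has exact index `3` has minimal polynomial `(z - 1)³`.
-/

theorem minpoly_eq_X_sub_C_pow {K A : Type*} [Field K] [Ring A] [Algebra K A] {a : A} (c : K)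
    {n : ℕ} (hpow : (a - algebraMap K A c) ^ (n + 1) = 0)
    (hne : (a - algebraMap K A c) ^ n ≠ 0) :
    minpoly K a = (X - C c) ^ (n + 1) := by
  have haeval : aeval a ((X - C c) ^ (n + 1)) = 0 := by simpa using hpow
  have hint : IsIntegral K a := ⟨_, (monic_X_sub_C c).pow _, haeval⟩
  obtain ⟨i, hi, hassoc⟩ :=
    (dvd_prime_pow (prime_X_sub_C c) _).mp (minpoly.dvd K a haeval)
  have hmin : minpoly K a = (X - C c) ^ i :=
    eq_of_monic_of_associated (minpoly.monic hint) ((monic_X_sub_C c).pow i) hassoc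
  obtain rfl : i = n + 1 := by
    refine le_antisymm hi (Nat.lt_of_not_le fun hin => hne ?_)
    have hzero : (a - algebraMap K A c) ^ i = 0 := by
      simpa [hmin] using minpoly.aeval K a
    rw [← Nat.add_sub_cancel' hin, pow_add, hzero, zero_mul]
  exact hmin

section Blk3

variable {m p q : Type*}

theorem blk3_mul [Fintype m] [Fintype p] [Fintype q]
    (P11 : Matrix m m ℝ) (P12 : Matrix m p ℝ) (P13 : Matrix m q ℝ)
    (P21 : Matrix p m ℝ) (P22 : Matrix p p ℝ) (P23 : Matrix p q ℝ)
    (P31 : Matrix q m ℝ) (P32 : Matrix q p ℝ) (P33 : Matrix q q ℝ)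
    (Q11 : Matrix m m ℝ) (Q12 : Matrix m p ℝ) (Q13 : Matrix m q ℝ)
    (Q21 : Matrix p m ℝ) (Q22 : Matrix p p ℝ) (Q23 : Matrix p q ℝ)
    (Q31 : Matrix q m ℝ) (Q32 : Matrix q p ℝ) (Q33 : Matrix q q ℝ) :
    blk3 P11 P12 P13 P21 P22 P23 P31 P32 P33 * blk3 Q11 Q12 Q13 Q21 Q22 Q23 Q31 Q32 Q33 =
      blk3 (P11 * Q11 + P12 * Q21 + P13 * Q31) (P11 * Q12 + P12 * Q22 + P13 * Q32)
        (P11 * Q13 + P12 * Q23 + P13 * Q33)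
        (P21 * Q11 + P22 * Q21 + P23 * Q31) (P21 * Q12 + P22 * Q22 + P23 * Q32)
        (P21 * Q13 + P22 * Q23 + P23 * Q33)
        (P31 * Q11 + P32 * Q21 + P33 * Q31) (P31 * Q12 + P32 * Q22 + P33 * Q32)
        (P31 * Q13 + P32 * Q23 + P33 * Q33) := by
  ext (i | i | i) (j | j | j) <;>
    simp [blk3, fromBlocks, fromCols, mul_apply, Fintype.sum_sum_type, add_assoc]

theorem blk3_sub
    (P11 : Matrix m m ℝ) (P12 : Matrix m p ℝ) (P13 : Matrix m q ℝ)
    (P21 : Matrix p m ℝ) (P22 : Matrix p p ℝ) (P23 : Matrix p q ℝ)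
    (P31 : Matrix q m ℝ) (P32 : Matrix q p ℝ) (P33 : Matrix q q ℝ)
    (Q11 : Matrix m m ℝ) (Q12 : Matrix m p ℝ) (Q13 : Matrix m q ℝ)
    (Q21 : Matrix p m ℝ) (Q22 : Matrix p p ℝ) (Q23 : Matrix p q ℝ)
    (Q31 : Matrix q m ℝ) (Q32 : Matrix q p ℝ) (Q33 : Matrix q q ℝ) :
    blk3 P11 P12 P13 P21 P22 P23 P31 P32 P33 - blk3 Q11 Q12 Q13 Q21 Q22 Q23 Q31 Q32 Q33 =
      blk3 (P11 - Q11) (P12 - Q12) (P13 - Q13) (P21 - Q21) (P22 - Q22) (P23 - Q23)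
        (P31 - Q31) (P32 - Q32) (P33 - Q33) := by
  ext (i | i | i) (j | j | j) <;> simp [blk3, fromBlocks, fromCols]

theorem blk3_one [DecidableEq m] [DecidableEq p] [DecidableEq q] :
    blk3 (m := m) (p := p) (q := q) 1 0 0 0 1 0 0 0 1 = 1 := by
  simp [blk3, fromBlocks_one]

@[simp]
theorem blk3_zero : blk3 (m := m) (p := p) (q := q) 0 0 0 0 0 0 0 0 0 = 0 := by
  simp [blk3]

theorem blk3_corner_eq_zero_iff (Z : Matrix m q ℝ) :
    blk3 (p := p) 0 0 Z 0 0 0 0 0 0 = 0 ↔ Z = 0 := by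
  refine ⟨fun h => ?_, fun h => by simp [h]⟩
  ext i j
  simpa [blk3, fromBlocks, fromCols] using congrFun (congrFun h (.inl i)) (.inr (.inr j))

theorem det_blk3_of_upper_eq_zero [Fintype m] [Fintype p] [Fintype q]
    [DecidableEq m] [DecidableEq p] [DecidableEq q]
    (P11 : Matrix m m ℝ) (P21 : Matrix p m ℝ) (P22 : Matrix p p ℝ)
    (P31 : Matrix q m ℝ) (P32 : Matrix q p ℝ) (P33 : Matrix q q ℝ) :
    (blk3 P11 0 0 P21 P22 0 P31 P32 P33).det = P11.det * (P22.det * P33.det) := by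
  rw [blk3, fromCols_zero, det_fromBlocks_zero₁₂, det_fromBlocks_zero₁₂]

theorem blk3_strictUpper_sq [Fintype m] [Fintype p] [Fintype q]
    [DecidableEq m] [DecidableEq p] [DecidableEq q]
    (X : Matrix m p ℝ) (Y : Matrix p q ℝ) :
    blk3 0 X 0 0 0 Y 0 0 0 ^ 2 = blk3 0 0 (X * Y) 0 0 0 0 0 0 := by
  simp [sq, blk3_mul]

theorem blk3_strictUpper_pow_three [Fintype m] [Fintype p] [Fintype q]
    [DecidableEq m] [DecidableEq p] [DecidableEq q]
    (X : Matrix m p ℝ) (Y : Matrix p q ℝ) :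
    blk3 0 X 0 0 0 Y 0 0 0 ^ 3 = 0 := by
  simp [pow_succ, blk3_mul]

end Blk3

section DoubleSaddlePoint

variable {m p q : Type*} [Fintype m] [Fintype p] [Fintype q]
  [DecidableEq m] [DecidableEq p] [DecidableEq q]
  {A : Matrix m m ℝ} {As : Matrix p p ℝ} {G : Matrix p m ℝ} {B : Matrix q p ℝ}
  {S1 : Matrix p p ℝ} {S2 : Matrix q q ℝ}

theorem blk3_schurFactor_mul_unitriangular (hA : IsUnit A) (hS1 : IsUnit S1)
    (hS1def : S1 = As + G * A⁻¹ * Gᵀ) (hS2def : S2 = B * S1⁻¹ * Bᵀ) :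
    blk3 A 0 0 G (-S1) 0 0 B S2 * blk3 1 (A⁻¹ * Gᵀ) 0 0 1 (-(S1⁻¹ * Bᵀ)) 0 0 1 =
      blk3 A Gᵀ 0 G (-As) Bᵀ 0 B 0 := by
  have hAA : A * A⁻¹ = 1 := mul_nonsing_inv A (A.isUnit_iff_isUnit_det.mp hA)
  have hSS : S1 * S1⁻¹ = 1 := mul_nonsing_inv S1 (S1.isUnit_iff_isUnit_det.mp hS1)
  rw [blk3_mul]
  simp only [Matrix.mul_one, Matrix.mul_zero, Matrix.zero_mul, add_zero, zero_add,
    ← Matrix.mul_assoc, hAA, hSS, Matrix.one_mul, Matrix.mul_neg, Matrix.neg_mul, neg_neg,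
    neg_zero]
  congr 1
  · rw [hS1def]; abel
  · rw [hS2def, neg_add_cancel]

theorem inv_blk3_schurFactor_mul_sub_one (hA : IsUnit A) (hS1 : IsUnit S1) (hS2 : IsUnit S2)
    (hS1def : S1 = As + G * A⁻¹ * Gᵀ) (hS2def : S2 = B * S1⁻¹ * Bᵀ) :
    (blk3 A 0 0 G (-S1) 0 0 B S2)⁻¹ * blk3 A Gᵀ 0 G (-As) Bᵀ 0 B 0 - 1 =
      blk3 0 (A⁻¹ * Gᵀ) 0 0 0 (-(S1⁻¹ * Bᵀ)) 0 0 0 := by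
  have hdet : IsUnit (blk3 A 0 0 G (-S1) 0 0 B S2).det := by
    rw [det_blk3_of_upper_eq_zero]
    exact (A.isUnit_iff_isUnit_det.mp hA).mul
      (((-S1).isUnit_iff_isUnit_det.mp hS1.neg).mul (S2.isUnit_iff_isUnit_det.mp hS2))
  rw [← blk3_schurFactor_mul_unitriangular hA hS1 hS1def hS2def, ← Matrix.mul_assoc,
    nonsing_inv_mul _ hdet, Matrix.one_mul, ← blk3_one, blk3_sub]
  simp

end DoubleSaddlePoint

/-- if `A⁻¹ Gᵀ S₁⁻¹ Bᵀ ≠ 0` then `(M₃⁻¹K − I)² ≠ 0` while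
`(M₃⁻¹K − I)³ = 0`; that is, the minimal polynomial of `M₃⁻¹K` is `(z − 1)³`. -/
theorem stmt3 (m p q : ℕ)
    (A : Matrix (Fin m) (Fin m) ℝ) (As : Matrix (Fin p) (Fin p) ℝ)
    (G : Matrix (Fin p) (Fin m) ℝ) (B : Matrix (Fin q) (Fin p) ℝ)
    (S1 : Matrix (Fin p) (Fin p) ℝ) (S2 : Matrix (Fin q) (Fin q) ℝ)
    (hS1def : S1 = As + G * A⁻¹ * Gᵀ) (hS2def : S2 = B * S1⁻¹ * Bᵀ)
    (hA : IsUnit A) (hS1 : IsUnit S1) (hS2 : IsUnit S2)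
    (K M3 : Matrix (Fin m ⊕ (Fin p ⊕ Fin q)) (Fin m ⊕ (Fin p ⊕ Fin q)) ℝ)
    (hK : K = blk3 A Gᵀ 0 G (-As) Bᵀ 0 B 0)
    (hM3 : M3 = blk3 A 0 0 G (-S1) 0 0 B S2)
    (hne : A⁻¹ * Gᵀ * S1⁻¹ * Bᵀ ≠ 0) :
    (M3⁻¹ * K - 1) ^ 2 ≠ 0 ∧ (M3⁻¹ * K - 1) ^ 3 = 0 ∧
    minpoly ℝ (M3⁻¹ * K) = (X - C 1) ^ 3 := by
  have hN : M3⁻¹ * K - 1 = blk3 0 (A⁻¹ * Gᵀ) 0 0 0 (-(S1⁻¹ * Bᵀ)) 0 0 0 := by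
    rw [hK, hM3, inv_blk3_schurFactor_mul_sub_one hA hS1 hS2 hS1def hS2def]
  have hsq : (M3⁻¹ * K - 1) ^ 2 ≠ 0 := by
    rw [hN, blk3_strictUpper_sq, Ne, blk3_corner_eq_zero_iff, Matrix.mul_neg, neg_eq_zero,
      ← Matrix.mul_assoc]
    exact hne
  have hcube : (M3⁻¹ * K - 1) ^ 3 = 0 := by rw [hN, blk3_strictUpper_pow_three]
  rw [← map_one (algebraMap ℝ _)] at hsq hcube
  exact ⟨hsq, hcube, minpoly_eq_X_sub_C_pow 1 hcube hsq⟩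
end

section
/- Let A be an invertible m×m real matrix, A_s a p×p real matrix, G a p×m real matrix, B a q×p real matrix, and suppose S₁ = A_s + G A⁻¹ Gᵀ and S₂ = B S₁⁻¹ Bᵀ are invertible (so in particular q ≤ p). Define the block lower-triangular preconditioner M₂ = [[A, 0, 0], [G, S₁, 0], [0, 0, S₂]]. Then the characteristic polynomial of M₂⁻¹K is det(λI − M₂⁻¹K) = (λ − 1)^m · (λ + 1)^{p−q} · (λ² + λ − 1)^q; equivalently, the eigenvalues of M₂⁻¹K are 1 with algebraic multiplicity m, −1 with algebraic multiplicity p − q, and (−1 + √5)/2 and (−1 − √5)/2 each with algebraic multiplicity q. -/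
/-!
Since `M₂ * [[I, A⁻¹Gᵀ, 0], [0, -I, S₁⁻¹Bᵀ], [0, S₂⁻¹B, 0]] = K` (the middle entry being
`G A⁻¹ Gᵀ - S₁ = -A_s`), the preconditioned matrix is block upper triangular with an identity
block of size `m`, and the remaining block `[[-I, U], [V, 0]]` satisfies `V U = I`.
Right multiplication of its characteristic matrix `[[(λ+1)I, -U], [-V, λI]]` by
`[[I, U], [0, (λ+1)I]]` gives `[[(λ+1)I, 0], [-V, (λ² + λ - 1)I]]`, so after cancelling the
monic factor `(λ+1)^q` the determinant is `(λ+1)^(p-q) (λ² + λ - 1)^q`; here `q ≤ p` because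
`V U = I`.
-/

open Matrix Polynomial

namespace Matrix

variable {R : Type*} [CommRing R] {m p q : Type*} [Fintype m] [Fintype p] [Fintype q]

theorem card_le_card_of_mul_eq_one [StrongRankCondition R] [DecidableEq q]
    {V : Matrix q p R} {U : Matrix p q R} (h : V * U = 1) : Fintype.card q ≤ Fintype.card p :=
  calc Fintype.card q = (V * U).rank := by rw [h, rank_one]
    _ ≤ V.rank := rank_mul_le_left V U
    _ ≤ Fintype.card p := rank_le_card_width V

variable [DecidableEq p] [DecidableEq q]

theorem det_fromBlocks_smul_one_mul_pow {V : Matrix q p R} {U : Matrix p q R} (h : V * U = 1)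
    (a d : R) :
    (fromBlocks (a • 1) (-U) (-V) (d • 1)).det * a ^ Fintype.card q =
      a ^ Fintype.card p * (a * d - 1) ^ Fintype.card q := by
  have hclear : fromBlocks (a • 1) (-U) (-V) (d • 1) * fromBlocks 1 U 0 (a • 1) =
      fromBlocks (a • 1) 0 (-V) ((a * d - 1) • 1) := by
    rw [fromBlocks_multiply]
    congr 1 <;> simp [h, sub_smul, mul_smul, smul_comm a d, neg_add_eq_sub]
  have := congrArg det hclear
  simpa only [det_mul, det_fromBlocks_zero₂₁, det_fromBlocks_zero₁₂, det_smul, det_one, mul_one,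
    one_mul] using this

theorem charpoly_fromBlocks_neg_one_zero [StrongRankCondition R]
    {V : Matrix q p R} {U : Matrix p q R} (h : V * U = 1) :
    (fromBlocks (-1) U V 0).charpoly =
      (X + 1) ^ (Fintype.card p - Fintype.card q) * (X ^ 2 + X - 1) ^ Fintype.card q := by
  have hmap : V.map C * U.map C = 1 := by
    rw [← Matrix.map_mul, h, Matrix.map_one _ C_0 C_1]
  have hcm : charmatrix (fromBlocks (-1) U V 0) =
      fromBlocks ((X + 1 : R[X]) • 1) (-U.map C) (-V.map C) ((X : R[X]) • 1) := by
    rw [charmatrix_fromBlocks]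
    congr 1 <;> ext i j <;> by_cases hij : i = j <;> simp [hij]
  have hreg : IsRightRegular ((X + 1 : R[X]) ^ Fintype.card q) := by
    simpa using ((monic_X_add_C (1 : R)).pow (Fintype.card q)).isRegular.right
  refine hreg (?_ : _ * _ = _ * _)
  rw [charpoly, hcm, det_fromBlocks_smul_one_mul_pow hmap,
    ← pow_mul_pow_sub _ (card_le_card_of_mul_eq_one h)]
  ring

end Matrix

section Blk3

variable {m p q : Type*} [Fintype m] [Fintype p] [Fintype q]

lemma blk3_mul_s4
    (A11 : Matrix m m ℝ) (A12 : Matrix m p ℝ) (A13 : Matrix m q ℝ)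
    (A21 : Matrix p m ℝ) (A22 : Matrix p p ℝ) (A23 : Matrix p q ℝ)
    (A31 : Matrix q m ℝ) (A32 : Matrix q p ℝ) (A33 : Matrix q q ℝ)
    (B11 : Matrix m m ℝ) (B12 : Matrix m p ℝ) (B13 : Matrix m q ℝ)
    (B21 : Matrix p m ℝ) (B22 : Matrix p p ℝ) (B23 : Matrix p q ℝ)
    (B31 : Matrix q m ℝ) (B32 : Matrix q p ℝ) (B33 : Matrix q q ℝ) :
    blk3 A11 A12 A13 A21 A22 A23 A31 A32 A33 * blk3 B11 B12 B13 B21 B22 B23 B31 B32 B33 =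
      blk3 (A11 * B11 + A12 * B21 + A13 * B31) (A11 * B12 + A12 * B22 + A13 * B32)
        (A11 * B13 + A12 * B23 + A13 * B33)
        (A21 * B11 + A22 * B21 + A23 * B31) (A21 * B12 + A22 * B22 + A23 * B32)
        (A21 * B13 + A22 * B23 + A23 * B33)
        (A31 * B11 + A32 * B21 + A33 * B31) (A31 * B12 + A32 * B22 + A33 * B32)
        (A31 * B13 + A32 * B23 + A33 * B33) := by
  ext (i | i | i) (j | j | j) <;>
    simp [blk3, mul_apply, Fintype.sum_sum_type] <;> ring

lemma det_blk3_zero₁₂_zero₁₃_zero₂₃ [DecidableEq m] [DecidableEq p] [DecidableEq q]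
    (M11 : Matrix m m ℝ) (M21 : Matrix p m ℝ) (M22 : Matrix p p ℝ)
    (M31 : Matrix q m ℝ) (M32 : Matrix q p ℝ) (M33 : Matrix q q ℝ) :
    (blk3 M11 0 0 M21 M22 0 M31 M32 M33).det = M11.det * M22.det * M33.det := by
  rw [blk3, fromCols_zero, det_fromBlocks_zero₁₂, det_fromBlocks_zero₁₂, mul_assoc]

lemma charpoly_blk3_one_zero₂₁_zero₃₁ [DecidableEq m] [DecidableEq p] [DecidableEq q]
    (M12 : Matrix m p ℝ) (M13 : Matrix m q ℝ) (M22 : Matrix p p ℝ) (M23 : Matrix p q ℝ)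
    (M32 : Matrix q p ℝ) (M33 : Matrix q q ℝ) :
    (blk3 1 M12 M13 0 M22 M23 0 M32 M33).charpoly =
      (X - 1) ^ Fintype.card m * (fromBlocks M22 M23 M32 M33).charpoly := by
  rw [blk3, fromRows_zero, charpoly_fromBlocks_zero₂₁, charpoly_one]

end Blk3

/-- the characteristic polynomial of `M₂⁻¹ K` is
`(λ − 1)^m (λ + 1)^(p−q) (λ² + λ − 1)^q`. -/
theorem stmt4 (m p q : ℕ)
    (A : Matrix (Fin m) (Fin m) ℝ) (As : Matrix (Fin p) (Fin p) ℝ)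
    (G : Matrix (Fin p) (Fin m) ℝ) (B : Matrix (Fin q) (Fin p) ℝ)
    (S1 : Matrix (Fin p) (Fin p) ℝ) (S2 : Matrix (Fin q) (Fin q) ℝ)
    (hS1def : S1 = As + G * A⁻¹ * Gᵀ) (hS2def : S2 = B * S1⁻¹ * Bᵀ)
    (hA : IsUnit A) (hS1 : IsUnit S1) (hS2 : IsUnit S2)
    (K M2 : Matrix (Fin m ⊕ (Fin p ⊕ Fin q)) (Fin m ⊕ (Fin p ⊕ Fin q)) ℝ)
    (hK : K = blk3 A Gᵀ 0 G (-As) Bᵀ 0 B 0)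
    (hM2 : M2 = blk3 A 0 0 G S1 0 0 0 S2) :
    (M2⁻¹ * K).charpoly =
      (X - 1) ^ m * (X + 1) ^ (p - q) * (X ^ 2 + X - 1) ^ q := by
  rw [isUnit_iff_isUnit_det] at hA hS1 hS2
  have hM2det : IsUnit M2.det := by
    rw [hM2, det_blk3_zero₁₂_zero₁₃_zero₂₃]
    exact (hA.mul hS1).mul hS2
  have hfac : K = M2 * blk3 1 (A⁻¹ * Gᵀ) 0 0 (-1) (S1⁻¹ * Bᵀ) 0 (S2⁻¹ * B) 0 := by
    have hSchur : G * (A⁻¹ * Gᵀ) - S1 = -As := by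
      rw [hS1def, ← Matrix.mul_assoc]
      abel
    rw [hK, hM2, blk3_mul_s4]
    congr 1 <;> simp [mul_nonsing_inv_cancel_left _ _ hA, mul_nonsing_inv_cancel_left _ _ hS1,
      mul_nonsing_inv_cancel_left _ _ hS2, ← sub_eq_add_neg, hSchur]
  have hVU : S2⁻¹ * B * (S1⁻¹ * Bᵀ) = 1 := by
    rw [Matrix.mul_assoc S2⁻¹ B, ← Matrix.mul_assoc B, ← hS2def, nonsing_inv_mul _ hS2]
  rw [hfac, nonsing_inv_mul_cancel_left _ _ hM2det, charpoly_blk3_one_zero₂₁_zero₃₁,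
    charpoly_fromBlocks_neg_one_zero hVU]
  simp only [Fintype.card_fin]
  ring
end

section
/- Let A be an invertible m×m real matrix, A_s a p×p real matrix, G a p×m real matrix, B a q×p real matrix, and suppose S₁ = A_s + G A⁻¹ Gᵀ and S₂ = B S₁⁻¹ Bᵀ are invertible. Define M₂ = [[A, 0, 0], [G, S₁, 0], [0, 0, S₂]]. Then for every nonzero y ∈ ℝ^p with B y = 0, the vector (−(1/2) A⁻¹ Gᵀ y, y, 0) is an eigenvector of M₂⁻¹K with eigenvalue −1; consequently the geometric multiplicity of the eigenvalue −1 of M₂⁻¹K is at least p − rank(B). -/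
open Matrix

/-!
For `B y = 0` and `v = (−½ A⁻¹Gᵀy, y, 0)` one checks blockwise that `K v = −M₂ v`: the first
block row gives `½ Gᵀy` on both sides, and in the second `S₁ = A_s + G A⁻¹ Gᵀ` makes
`G v₁ − A_s y` the negative of `G v₁ + S₁ y`. As `M₂` is block lower triangular with invertible
diagonal blocks, `M₂⁻¹ K v = −v`. Since `y ↦ v` is injective, it embeds `ker B`, of dimension
`p − rank B`, into the `−1`-eigenspace of `M₂⁻¹ K`.
-/

section BlockMatrix

variable {m p q : Type*} [Fintype m] [Fintype p] [Fintype q]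

theorem blk3_mulVec_sumElim
    (M11 : Matrix m m ℝ) (M12 : Matrix m p ℝ) (M13 : Matrix m q ℝ)
    (M21 : Matrix p m ℝ) (M22 : Matrix p p ℝ) (M23 : Matrix p q ℝ)
    (M31 : Matrix q m ℝ) (M32 : Matrix q p ℝ) (M33 : Matrix q q ℝ)
    (x : m → ℝ) (y : p → ℝ) (z : q → ℝ) :
    blk3 M11 M12 M13 M21 M22 M23 M31 M32 M33 *ᵥ Sum.elim x (Sum.elim y z) =
      Sum.elim (M11 *ᵥ x + M12 *ᵥ y + M13 *ᵥ z)
        (Sum.elim (M21 *ᵥ x + M22 *ᵥ y + M23 *ᵥ z) (M31 *ᵥ x + M32 *ᵥ y + M33 *ᵥ z)) := by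
  ext (i | i | i) <;>
    simp [blk3, fromBlocks_mulVec, fromRows_mulVec, add_assoc]

variable [DecidableEq m] [DecidableEq p] [DecidableEq q]

theorem det_blk3_lowerTriangular (A : Matrix m m ℝ) (G : Matrix p m ℝ)
    (S : Matrix p p ℝ) (T : Matrix q q ℝ) :
    (blk3 A 0 0 G S 0 0 0 T).det = A.det * (S.det * T.det) := by
  rw [blk3, fromCols_zero, det_fromBlocks_zero₁₂, det_fromBlocks_zero₁₂]

theorem isUnit_blk3_lowerTriangular {A : Matrix m m ℝ} {S : Matrix p p ℝ}
    {T : Matrix q q ℝ} (hA : IsUnit A) (hS : IsUnit S) (hT : IsUnit T) (G : Matrix p m ℝ) :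
    IsUnit (blk3 A 0 0 G S 0 0 0 T) := by
  simp only [isUnit_iff_isUnit_det, det_blk3_lowerTriangular] at *
  exact hA.mul (hS.mul hT)

end BlockMatrix

theorem Matrix.rank_add_finrank_ker_mulVecLin {m n K : Type*} [Fintype m] [Fintype n] [Field K]
    (B : Matrix m n K) :
    B.rank + Module.finrank K (LinearMap.ker B.mulVecLin) = Fintype.card n := by
  rw [rank, LinearMap.finrank_range_add_finrank_ker, Module.finrank_fintype_fun_eq_card]

section Eigen

variable {n R : Type*} [Fintype n] [DecidableEq n] [CommRing R]

theorem Matrix.mem_ker_sub_smul_one_iff (M : Matrix n n R) (μ : R) (v : n → R) :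
    v ∈ LinearMap.ker (M - μ • 1).mulVecLin ↔ M *ᵥ v = μ • v := by
  rw [LinearMap.mem_ker, mulVecLin_apply, sub_mulVec, smul_mulVec, one_mulVec, sub_eq_zero]

theorem Matrix.nonsing_inv_mul_mulVec_eq_smul {M K : Matrix n n R} (hM : IsUnit M)
    {v : n → R} {μ : R} (h : K *ᵥ v = μ • (M *ᵥ v)) : (M⁻¹ * K) *ᵥ v = μ • v := by
  rw [← mulVec_mulVec, h, mulVec_smul, mulVec_mulVec,
    nonsing_inv_mul M ((isUnit_iff_isUnit_det M).mp hM), one_mulVec]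

end Eigen

section DoubleSaddlePoint

variable {m p q : Type*} [Fintype p]

def sumElimGraph (C : Matrix m p ℝ) : (p → ℝ) →ₗ[ℝ] (m ⊕ (p ⊕ q) → ℝ) where
  toFun y := Sum.elim (C *ᵥ y) (Sum.elim y 0)
  map_add' y y' := by ext (i | i | i) <;> simp [mulVec_add]
  map_smul' c y := by ext (i | i | i) <;> simp [mulVec_smul]

theorem sumElimGraph_apply (C : Matrix m p ℝ) (y : p → ℝ) :
    sumElimGraph (q := q) C y = Sum.elim (C *ᵥ y) (Sum.elim y 0) := rfl

theorem sumElimGraph_injective (C : Matrix m p ℝ) :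
    Function.Injective (sumElimGraph (q := q) C) := fun _ _ h =>
  funext fun i => congrFun h (Sum.inr (Sum.inl i))

variable [Fintype m] [Fintype q] [DecidableEq m]

theorem doubleSaddle_mulVec_eq_neg_mulVec {A : Matrix m m ℝ} (hA : IsUnit A)
    (As : Matrix p p ℝ) (G : Matrix p m ℝ) {B : Matrix q p ℝ} (S2 : Matrix q q ℝ)
    {y : p → ℝ} (hy : B *ᵥ y = 0) :
    blk3 A Gᵀ 0 G (-As) Bᵀ 0 B 0 *ᵥ sumElimGraph (-(1 / 2 : ℝ) • (A⁻¹ * Gᵀ)) y =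
      (-1 : ℝ) • (blk3 A 0 0 G (As + G * A⁻¹ * Gᵀ) 0 0 0 S2 *ᵥ
        sumElimGraph (-(1 / 2 : ℝ) • (A⁻¹ * Gᵀ)) y) := by
  have hAA : A * A⁻¹ = 1 := mul_nonsing_inv A ((isUnit_iff_isUnit_det A).mp hA)
  have hA_cancel : A *ᵥ (A⁻¹ * Gᵀ) *ᵥ y = Gᵀ *ᵥ y := by
    rw [mulVec_mulVec, ← Matrix.mul_assoc, hAA, Matrix.one_mul]
  have hG_schur : G *ᵥ (A⁻¹ * Gᵀ) *ᵥ y = (G * A⁻¹ * Gᵀ) *ᵥ y := by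
    rw [mulVec_mulVec, Matrix.mul_assoc]
  rw [sumElimGraph_apply, blk3_mulVec_sumElim, blk3_mulVec_sumElim, smul_mulVec]
  simp only [mulVec_smul, mulVec_zero, zero_mulVec, hy, hA_cancel, hG_schur, add_mulVec,
    neg_mulVec]
  ext (i | i | i) <;> simp <;> ring

end DoubleSaddlePoint

theorem stmt6_general (m p q : ℕ)
    (A : Matrix (Fin m) (Fin m) ℝ) (As : Matrix (Fin p) (Fin p) ℝ)
    (G : Matrix (Fin p) (Fin m) ℝ) (B : Matrix (Fin q) (Fin p) ℝ)
    (S1 : Matrix (Fin p) (Fin p) ℝ) (S2 : Matrix (Fin q) (Fin q) ℝ)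
    (hS1def : S1 = As + G * A⁻¹ * Gᵀ)
    (hA : IsUnit A) (hS1 : IsUnit S1) (hS2 : IsUnit S2)
    (K M2 : Matrix (Fin m ⊕ (Fin p ⊕ Fin q)) (Fin m ⊕ (Fin p ⊕ Fin q)) ℝ)
    (hK : K = blk3 A Gᵀ 0 G (-As) Bᵀ 0 B 0)
    (hM2 : M2 = blk3 A 0 0 G S1 0 0 0 S2) :
    (∀ y : Fin p → ℝ, y ≠ 0 → B *ᵥ y = 0 →
      (M2⁻¹ * K) *ᵥ Sum.elim (-(1 / 2 : ℝ) • ((A⁻¹ * Gᵀ) *ᵥ y)) (Sum.elim y (0 : Fin q → ℝ)) =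
        (-1 : ℝ) • Sum.elim (-(1 / 2 : ℝ) • ((A⁻¹ * Gᵀ) *ᵥ y)) (Sum.elim y (0 : Fin q → ℝ)) ∧
      Sum.elim (-(1 / 2 : ℝ) • ((A⁻¹ * Gᵀ) *ᵥ y)) (Sum.elim y (0 : Fin q → ℝ)) ≠ 0) ∧
    p - B.rank ≤
      Module.finrank ℝ (LinearMap.ker (M2⁻¹ * K - (-1 : ℝ) • 1).mulVecLin) := by
  set L := sumElimGraph (q := Fin q) (-(1 / 2 : ℝ) • (A⁻¹ * Gᵀ))
  have hL (y : Fin p → ℝ) :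
      L y = Sum.elim (-(1 / 2 : ℝ) • ((A⁻¹ * Gᵀ) *ᵥ y)) (Sum.elim y 0) := by
    rw [sumElimGraph_apply, smul_mulVec]
  have hM2_unit : IsUnit M2 := hM2 ▸ isUnit_blk3_lowerTriangular hA hS1 hS2 G
  have h_eigen {y : Fin p → ℝ} (hy : B *ᵥ y = 0) : (M2⁻¹ * K) *ᵥ L y = (-1 : ℝ) • L y :=
    nonsing_inv_mul_mulVec_eq_smul hM2_unit <| by
      rw [hK, hM2, hS1def]
      exact doubleSaddle_mulVec_eq_neg_mulVec hA As G S2 hy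
  refine ⟨fun y hy hBy => ?_, ?_⟩
  · rw [← hL]
    exact ⟨h_eigen hBy, (map_ne_zero_iff L (sumElimGraph_injective _)).mpr hy⟩
  · have h_map : (LinearMap.ker B.mulVecLin).map L ≤
        LinearMap.ker (M2⁻¹ * K - (-1 : ℝ) • 1).mulVecLin := by
      rintro _ ⟨y, hy, rfl⟩
      exact (mem_ker_sub_smul_one_iff _ _ _).mpr (h_eigen hy)
    have h_rank := B.rank_add_finrank_ker_mulVecLin
    rw [Fintype.card_fin] at h_rank
    calc p - B.rank = Module.finrank ℝ (LinearMap.ker B.mulVecLin) := by omega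
      _ = Module.finrank ℝ ((LinearMap.ker B.mulVecLin).map L) :=
        (Submodule.equivMapOfInjective L (sumElimGraph_injective _) _).finrank_eq
      _ ≤ _ := Submodule.finrank_mono h_map

/-- for every nonzero `y` with `B y = 0`, the vector
`(−(1/2) A⁻¹ Gᵀ y, y, 0)` is an eigenvector of `M₂⁻¹K` with eigenvalue `−1`;
hence the geometric multiplicity of the eigenvalue `−1` is at least
`p − rank B`. -/
theorem stmt6 (m p q : ℕ)
    (A : Matrix (Fin m) (Fin m) ℝ) (As : Matrix (Fin p) (Fin p) ℝ)
    (G : Matrix (Fin p) (Fin m) ℝ) (B : Matrix (Fin q) (Fin p) ℝ)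
    (S1 : Matrix (Fin p) (Fin p) ℝ) (S2 : Matrix (Fin q) (Fin q) ℝ)
    (hS1def : S1 = As + G * A⁻¹ * Gᵀ) (hS2def : S2 = B * S1⁻¹ * Bᵀ)
    (hA : IsUnit A) (hS1 : IsUnit S1) (hS2 : IsUnit S2)
    (K M2 : Matrix (Fin m ⊕ (Fin p ⊕ Fin q)) (Fin m ⊕ (Fin p ⊕ Fin q)) ℝ)
    (hK : K = blk3 A Gᵀ 0 G (-As) Bᵀ 0 B 0)
    (hM2 : M2 = blk3 A 0 0 G S1 0 0 0 S2) :
    (∀ y : Fin p → ℝ, y ≠ 0 → B *ᵥ y = 0 →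
      (M2⁻¹ * K) *ᵥ Sum.elim (-(1 / 2 : ℝ) • ((A⁻¹ * Gᵀ) *ᵥ y)) (Sum.elim y (0 : Fin q → ℝ)) =
        (-1 : ℝ) • Sum.elim (-(1 / 2 : ℝ) • ((A⁻¹ * Gᵀ) *ᵥ y)) (Sum.elim y (0 : Fin q → ℝ)) ∧
      Sum.elim (-(1 / 2 : ℝ) • ((A⁻¹ * Gᵀ) *ᵥ y)) (Sum.elim y (0 : Fin q → ℝ)) ≠ 0) ∧
    p - B.rank ≤
      Module.finrank ℝ (LinearMap.ker (M2⁻¹ * K - (-1 : ℝ) • 1).mulVecLin) :=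
  stmt6_general m p q A As G B S1 S2 hS1def hA hS1 hS2 K M2 hK hM2
end

section
/- Let A be an invertible m×m real matrix, A_s a p×p real matrix, G a p×m real matrix, B a q×p real matrix, and suppose S₁ = A_s + G A⁻¹ Gᵀ and S₂ = B S₁⁻¹ Bᵀ are invertible. Define M₁ = blockdiag(A, S₁, S₂). Then for every nonzero y ∈ ℝ^p with Gᵀ y = 0 and B y = 0, the vector (0, y, 0) is an eigenvector of M₁⁻¹K with eigenvalue −1; consequently the geometric multiplicity of the eigenvalue −1 of M₁⁻¹K is at least the dimension of ker(Gᵀ) ∩ ker(B). -/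
open Matrix

/-!
For `v = (0, y, 0)` with `Gᵀ y = 0` and `B y = 0` one has `K v = (0, -A_s y, 0)`, while
`S₁ y = A_s y` because the correction term `G A⁻¹ Gᵀ y` vanishes; hence `K v = -M₁ v`, i.e.
`M₁⁻¹ K v = -v`. The injective linear map `y ↦ (0, y, 0)` then embeds `ker Gᵀ ∩ ker B` into
the `-1`-eigenspace of `M₁⁻¹ K`.
-/

theorem Submodule.finrank_le_finrank_of_map_le {K V W : Type*} [DivisionRing K]
    [AddCommGroup V] [Module K V] [AddCommGroup W] [Module K W] [FiniteDimensional K W]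
    {f : V →ₗ[K] W} (hf : Function.Injective f) {U : Submodule K V} {U' : Submodule K W}
    (h : U.map f ≤ U') : Module.finrank K U ≤ Module.finrank K U' :=
  (U.equivMapOfInjective f hf).finrank_eq.trans_le (Submodule.finrank_mono h)

namespace Matrix

section Eigen

variable {R n : Type*} [CommRing R] [Fintype n] [DecidableEq n]

theorem mem_ker_mulVecLin_sub_smul_one_iff (N : Matrix n n R) (μ : R) (v : n → R) :
    v ∈ LinearMap.ker (N - μ • 1).mulVecLin ↔ N *ᵥ v = μ • v := by
  rw [LinearMap.mem_ker, mulVecLin_apply, sub_mulVec, smul_mulVec, one_mulVec, sub_eq_zero]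

theorem inv_mul_mulVec_eq_smul_of_mulVec_eq {M K : Matrix n n R} (hM : IsUnit M) {μ : R}
    {v : n → R} (h : K *ᵥ v = M *ᵥ (μ • v)) : (M⁻¹ * K) *ᵥ v = μ • v := by
  obtain ⟨_⟩ := hM.nonempty_invertible
  rw [← mulVec_mulVec]
  exact inv_mulVec_eq_vec h

end Eigen

theorem add_mul_mul_transpose_mulVec_of_transpose_mulVec_eq_zero {R m p : Type*} [CommRing R]
    [Fintype m] [Fintype p] (As : Matrix p p R) (G : Matrix p m R) (X : Matrix m m R)
    {y : p → R} (hy : Gᵀ *ᵥ y = 0) : (As + G * X * Gᵀ) *ᵥ y = As *ᵥ y := by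
  rw [add_mulVec, ← mulVec_mulVec, hy, mulVec_zero, add_zero]

end Matrix

def sumElimMiddle (R m p q : Type*) [Semiring R] : (p → R) →ₗ[R] (m ⊕ (p ⊕ q) → R) where
  toFun y := Sum.elim 0 (Sum.elim y 0)
  map_add' x y := by ext (i | i | i) <;> simp
  map_smul' c y := by ext (i | i | i) <;> simp

theorem sumElimMiddle_injective (R m p q : Type*) [Semiring R] :
    Function.Injective (sumElimMiddle R m p q) :=
  fun _ _ h => funext fun i => congrFun h (Sum.inr (Sum.inl i))

theorem blk3_diag_eq_fromBlocks {m p q : Type*} (A : Matrix m m ℝ) (B : Matrix p p ℝ) (C : Matrix q q ℝ) :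
    blk3 A 0 0 0 B 0 0 0 C = fromBlocks A 0 0 (fromBlocks B 0 0 C) := by
  simp only [blk3, fromCols_zero, fromRows_zero]

section Blk3

variable {m p q : Type*} [Fintype m] [Fintype p] [Fintype q]

theorem blk3_mulVec_sumElimMiddle (M11 : Matrix m m ℝ) (M12 : Matrix m p ℝ)
    (M13 : Matrix m q ℝ) (M21 : Matrix p m ℝ) (M22 : Matrix p p ℝ) (M23 : Matrix p q ℝ)
    (M31 : Matrix q m ℝ) (M32 : Matrix q p ℝ) (M33 : Matrix q q ℝ) (y : p → ℝ) :
    blk3 M11 M12 M13 M21 M22 M23 M31 M32 M33 *ᵥ sumElimMiddle ℝ m p q y =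
      Sum.elim (M12 *ᵥ y) (Sum.elim (M22 *ᵥ y) (M32 *ᵥ y)) := by
  ext (i | i | i) <;> simp [blk3, sumElimMiddle, fromBlocks_mulVec]

theorem isUnit_blk3_diag [DecidableEq m] [DecidableEq p] [DecidableEq q] {A : Matrix m m ℝ}
    {B : Matrix p p ℝ} {C : Matrix q q ℝ} (hA : IsUnit A) (hB : IsUnit B) (hC : IsUnit C) :
    IsUnit (blk3 A 0 0 0 B 0 0 0 C) := by
  rw [blk3_diag_eq_fromBlocks, isUnit_iff_isUnit_det, det_fromBlocks_zero₂₁,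
    det_fromBlocks_zero₂₁]
  exact (hA.map detMonoidHom).mul ((hB.map detMonoidHom).mul (hC.map detMonoidHom))

theorem doubleSaddle_mulVec_sumElimMiddle [DecidableEq m] (A : Matrix m m ℝ)
    (As : Matrix p p ℝ) (G : Matrix p m ℝ) (B : Matrix q p ℝ) (S2 : Matrix q q ℝ)
    {y : p → ℝ} (hGy : Gᵀ *ᵥ y = 0) (hBy : B *ᵥ y = 0) :
    blk3 A Gᵀ 0 G (-As) Bᵀ 0 B 0 *ᵥ sumElimMiddle ℝ m p q y =
      blk3 A 0 0 0 (As + G * A⁻¹ * Gᵀ) 0 0 0 S2 *ᵥ ((-1 : ℝ) • sumElimMiddle ℝ m p q y) := by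
  rw [← map_smul, blk3_mulVec_sumElimMiddle, blk3_mulVec_sumElimMiddle]
  simp only [mulVec_smul, add_mul_mul_transpose_mulVec_of_transpose_mulVec_eq_zero _ _ _ hGy]
  simp [hGy, hBy, neg_mulVec]

end Blk3

theorem stmt10_general (m p q : ℕ)
    (A : Matrix (Fin m) (Fin m) ℝ) (As : Matrix (Fin p) (Fin p) ℝ)
    (G : Matrix (Fin p) (Fin m) ℝ) (B : Matrix (Fin q) (Fin p) ℝ)
    (S1 : Matrix (Fin p) (Fin p) ℝ) (S2 : Matrix (Fin q) (Fin q) ℝ)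
    (hS1def : S1 = As + G * A⁻¹ * Gᵀ)
    (hA : IsUnit A) (hS1 : IsUnit S1) (hS2 : IsUnit S2)
    (K M1 : Matrix (Fin m ⊕ (Fin p ⊕ Fin q)) (Fin m ⊕ (Fin p ⊕ Fin q)) ℝ)
    (hK : K = blk3 A Gᵀ 0 G (-As) Bᵀ 0 B 0)
    (hM1 : M1 = blk3 A 0 0 0 S1 0 0 0 S2) :
    (∀ y : Fin p → ℝ, y ≠ 0 → Gᵀ *ᵥ y = 0 → B *ᵥ y = 0 →
      (M1⁻¹ * K) *ᵥ Sum.elim (0 : Fin m → ℝ) (Sum.elim y (0 : Fin q → ℝ)) =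
        (-1 : ℝ) • Sum.elim (0 : Fin m → ℝ) (Sum.elim y (0 : Fin q → ℝ)) ∧
      Sum.elim (0 : Fin m → ℝ) (Sum.elim y (0 : Fin q → ℝ)) ≠ 0) ∧
    Module.finrank ℝ ↥(LinearMap.ker Gᵀ.mulVecLin ⊓ LinearMap.ker B.mulVecLin) ≤
      Module.finrank ℝ (LinearMap.ker (M1⁻¹ * K - (-1 : ℝ) • 1).mulVecLin) := by
  have hM1unit : IsUnit M1 := hM1 ▸ isUnit_blk3_diag hA hS1 hS2
  have eigen : ∀ y, Gᵀ *ᵥ y = 0 → B *ᵥ y = 0 →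
      (M1⁻¹ * K) *ᵥ sumElimMiddle ℝ _ _ _ y = (-1 : ℝ) • sumElimMiddle ℝ (Fin m) _ (Fin q) y :=
    fun y hGy hBy => Matrix.inv_mul_mulVec_eq_smul_of_mulVec_eq hM1unit <| by
      rw [hK, hM1, hS1def]
      exact doubleSaddle_mulVec_sumElimMiddle A As G B S2 hGy hBy
  refine ⟨fun y hy hGy hBy => ⟨eigen y hGy hBy, ?_⟩, ?_⟩
  · exact (sumElimMiddle_injective ℝ (Fin m) (Fin p) (Fin q)).ne_iff' (map_zero _) |>.2 hy
  · refine Submodule.finrank_le_finrank_of_map_le (sumElimMiddle_injective ℝ _ _ _) ?_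
    rintro _ ⟨y, ⟨hGy, hBy⟩, rfl⟩
    exact (Matrix.mem_ker_mulVecLin_sub_smul_one_iff _ _ _).2 (eigen y hGy hBy)

/-- for every nonzero `y` with `Gᵀ y = 0` and `B y = 0`, the
vector `(0, y, 0)` is an eigenvector of `M₁⁻¹K` with eigenvalue `−1`; hence
the geometric multiplicity of the eigenvalue `−1` is at least
`dim (ker Gᵀ ⊓ ker B)`. -/
theorem stmt10 (m p q : ℕ)
    (A : Matrix (Fin m) (Fin m) ℝ) (As : Matrix (Fin p) (Fin p) ℝ)
    (G : Matrix (Fin p) (Fin m) ℝ) (B : Matrix (Fin q) (Fin p) ℝ)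
    (S1 : Matrix (Fin p) (Fin p) ℝ) (S2 : Matrix (Fin q) (Fin q) ℝ)
    (hS1def : S1 = As + G * A⁻¹ * Gᵀ) (hS2def : S2 = B * S1⁻¹ * Bᵀ)
    (hA : IsUnit A) (hS1 : IsUnit S1) (hS2 : IsUnit S2)
    (K M1 : Matrix (Fin m ⊕ (Fin p ⊕ Fin q)) (Fin m ⊕ (Fin p ⊕ Fin q)) ℝ)
    (hK : K = blk3 A Gᵀ 0 G (-As) Bᵀ 0 B 0)
    (hM1 : M1 = blk3 A 0 0 0 S1 0 0 0 S2) :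
    (∀ y : Fin p → ℝ, y ≠ 0 → Gᵀ *ᵥ y = 0 → B *ᵥ y = 0 →
      (M1⁻¹ * K) *ᵥ Sum.elim (0 : Fin m → ℝ) (Sum.elim y (0 : Fin q → ℝ)) =
        (-1 : ℝ) • Sum.elim (0 : Fin m → ℝ) (Sum.elim y (0 : Fin q → ℝ)) ∧
      Sum.elim (0 : Fin m → ℝ) (Sum.elim y (0 : Fin q → ℝ)) ≠ 0) ∧
    Module.finrank ℝ ↥(LinearMap.ker Gᵀ.mulVecLin ⊓ LinearMap.ker B.mulVecLin) ≤
      Module.finrank ℝ (LinearMap.ker (M1⁻¹ * K - (-1 : ℝ) • 1).mulVecLin) :=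
  stmt10_general m p q A As G B S1 S2 hS1def hA hS1 hS2 K M1 hK hM1
end

section
/- Let A be an invertible m×m real matrix, A_s a p×p real matrix, G a p×m real matrix, B a q×p real matrix, and suppose S₁ = A_s + G A⁻¹ Gᵀ and S₂ = B S₁⁻¹ Bᵀ are invertible. Define M₁ = blockdiag(A, S₁, S₂). Let λ ∈ ℝ be an eigenvalue of M₁⁻¹K with λ ∉ {1, −1, (−1+√5)/2, (−1−√5)/2}. Then every eigenvector (x, y, z) of M₁⁻¹K with eigenvalue λ satisfies Gᵀ y ≠ 0, and the geometric multiplicity of λ is at most rank(G). In particular, every real eigenvalue λ > 1 of M₁⁻¹K, and every real eigenvalue λ ∈ (0,1) with λ ≠ (−1+√5)/2, has geometric multiplicity at most rank(G). -/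
open Matrix

/-! If `(x, y, z)` is an eigenvector of `M₁⁻¹K` for `λ` with `Gᵀ y = 0`, the first block row
gives `(λ - 1) A x = 0`, so `x = 0`. Then `S₁ y = A_s y`, the second row gives
`Bᵀ z = (λ + 1) S₁ y`, and the third `S₂ z = B S₁⁻¹ Bᵀ z = (λ + 1) B y = (λ + 1) λ S₂ z`.
Unless `(λ + 1) λ = 1` this forces `z = 0`, and then `y = 0` when `λ ≠ -1`. Hence `v ↦ Gᵀ y` is
injective on the eigenspace, whose dimension is at most `rank Gᵀ = rank G`. -/

theorem Submodule.finrank_le_finrank_range_of_disjoint_ker {𝕜 V W : Type*} [Field 𝕜]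
    [AddCommGroup V] [Module 𝕜 V] [FiniteDimensional 𝕜 V] [AddCommGroup W] [Module 𝕜 W]
    (f : V →ₗ[𝕜] W) {U : Submodule 𝕜 V} (hU : Disjoint U (LinearMap.ker f)) :
    Module.finrank 𝕜 U ≤ Module.finrank 𝕜 (LinearMap.range f) := by
  rw [← LinearMap.finrank_range_of_inj (LinearMap.injective_domRestrict_iff.2 hU)]
  exact Submodule.finrank_mono (LinearMap.range_domRestrict_le_range f U)

theorem Sum.smul_elim {R M α β : Type*} [SMul R M] (c : R) (f : α → M) (g : β → M) :
    c • Sum.elim f g = Sum.elim (c • f) (c • g) := by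
  ext (a | b) <;> rfl

namespace Matrix

variable {𝕜 : Type*} [Field 𝕜] {n : Type*} [Fintype n] [DecidableEq n]

theorem inv_mul_mulVec_eq_smul_iff {M K : Matrix n n 𝕜} (hM : IsUnit M) {v : n → 𝕜} {c : 𝕜} :
    (M⁻¹ * K) *ᵥ v = c • v ↔ K *ᵥ v = c • M *ᵥ v := by
  rw [← (mulVec_injective_iff_isUnit.2 hM).eq_iff, ← mulVec_mulVec, mulVec_mulVec,
    mul_nonsing_inv _ ((isUnit_iff_isUnit_det M).1 hM), one_mulVec, mulVec_smul]

theorem finrank_ker_sub_smul_one_le_rank {l k : Type*} [Fintype l] (M : Matrix n n 𝕜) (c : 𝕜)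
    (N : Matrix k l 𝕜) (π : (n → 𝕜) →ₗ[𝕜] l → 𝕜)
    (h : ∀ v, M *ᵥ v = c • v → N *ᵥ π v = 0 → v = 0) :
    Module.finrank 𝕜 (LinearMap.ker (M - c • 1).mulVecLin) ≤ N.rank := by
  refine (Submodule.finrank_le_finrank_range_of_disjoint_ker (N.mulVecLin ∘ₗ π) ?_).trans
    (Submodule.finrank_mono (LinearMap.range_comp_le_range _ _))
  refine Submodule.disjoint_def.2 fun v hv hNv => h v ?_ hNv
  rwa [LinearMap.mem_ker, mulVecLin_apply, sub_mulVec, smul_mulVec, one_mulVec,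
    sub_eq_zero] at hv

end Matrix

section DoubleSaddlePoint

variable {𝕜 : Type*} [Field 𝕜] {m p q : Type*} [Fintype m] [Fintype p] [Fintype q]
  [DecidableEq m] [DecidableEq p] [DecidableEq q]
  {A : Matrix m m 𝕜} {As S₁ : Matrix p p 𝕜} {G : Matrix p m 𝕜} {B : Matrix q p 𝕜}
  {S₂ : Matrix q q 𝕜} {lam : 𝕜} {x : m → 𝕜} {y : p → 𝕜} {z : q → 𝕜}

theorem eq_zero_of_doubleSaddlePoint_eigen (hS₁ : S₁ = As + G * A⁻¹ * Gᵀ)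
    (hS₂ : S₂ = B * S₁⁻¹ * Bᵀ) (hA : IsUnit A) (hS₁u : IsUnit S₁) (hS₂u : IsUnit S₂)
    (h₁ : lam ≠ 1) (h₂ : lam ≠ -1) (h₃ : (lam + 1) * lam ≠ 1)
    (ex : A *ᵥ x + Gᵀ *ᵥ y = lam • A *ᵥ x)
    (ey : G *ᵥ x + -As *ᵥ y + Bᵀ *ᵥ z = lam • S₁ *ᵥ y)
    (ez : B *ᵥ y = lam • S₂ *ᵥ z) (hGy : Gᵀ *ᵥ y = 0) :
    x = 0 ∧ y = 0 ∧ z = 0 := by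
  have hx : x = 0 := by
    have h : (lam - 1) • A *ᵥ x = 0 := by rw [sub_smul, one_smul, ← ex, hGy, add_zero, sub_self]
    exact eq_zero_of_mulVec_eq_zero (A.isUnit_iff_isUnit_det.1 hA).ne_zero
      ((smul_eq_zero.1 h).resolve_left (sub_ne_zero.2 h₁))
  have hS₁y : S₁ *ᵥ y = As *ᵥ y := by
    rw [hS₁, add_mulVec, ← mulVec_mulVec, hGy, mulVec_zero, add_zero]
  have hBz : Bᵀ *ᵥ z = (lam + 1) • S₁ *ᵥ y := by
    rw [hx, mulVec_zero, zero_add, neg_mulVec, ← hS₁y] at ey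
    rw [add_smul, one_smul, ← ey]
    abel
  have hS₂z : S₂ *ᵥ z = ((lam + 1) * lam) • S₂ *ᵥ z :=
    calc S₂ *ᵥ z = B *ᵥ S₁⁻¹ *ᵥ Bᵀ *ᵥ z := by rw [hS₂, mulVec_mulVec, mulVec_mulVec]
      _ = (lam + 1) • B *ᵥ y := by
        rw [hBz, mulVec_smul, mulVec_mulVec,
          nonsing_inv_mul _ (S₁.isUnit_iff_isUnit_det.1 hS₁u), one_mulVec, mulVec_smul]
      _ = ((lam + 1) * lam) • S₂ *ᵥ z := by rw [ez, smul_smul]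
  have hz : z = 0 := by
    have h : (1 - (lam + 1) * lam) • S₂ *ᵥ z = 0 := by
      rw [sub_smul, one_smul, ← hS₂z, sub_self]
    exact eq_zero_of_mulVec_eq_zero (S₂.isUnit_iff_isUnit_det.1 hS₂u).ne_zero
      ((smul_eq_zero.1 h).resolve_left (sub_ne_zero.2 h₃.symm))
  have hy : y = 0 := by
    rw [hz, mulVec_zero, eq_comm, smul_eq_zero] at hBz
    exact eq_zero_of_mulVec_eq_zero (S₁.isUnit_iff_isUnit_det.1 hS₁u).ne_zero
      (hBz.resolve_left fun h => h₂ (eq_neg_of_add_eq_zero_left h))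
  exact ⟨hx, hy, hz⟩

end DoubleSaddlePoint

section Blk3

variable {m p q : Type*} [Fintype m] [Fintype p] [Fintype q]

theorem isUnit_blk3_diagonal [DecidableEq m] [DecidableEq p] [DecidableEq q]
    {A : Matrix m m ℝ} {S₁ : Matrix p p ℝ} {S₂ : Matrix q q ℝ}
    (hA : IsUnit A) (hS₁ : IsUnit S₁) (hS₂ : IsUnit S₂) :
    IsUnit (blk3 A 0 0 0 S₁ 0 0 0 S₂) := by
  simp only [blk3, fromCols_zero, fromRows_zero, isUnit_fromBlocks_zero₂₁]
  exact ⟨hA, hS₁, hS₂⟩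

end Blk3

theorem doubleSaddlePoint_eigvec_eq_zero {m p q : Type*} [Fintype m] [Fintype p] [Fintype q]
    [DecidableEq m] [DecidableEq p] [DecidableEq q]
    {A : Matrix m m ℝ} {As S₁ : Matrix p p ℝ} {G : Matrix p m ℝ} {B : Matrix q p ℝ}
    {S₂ : Matrix q q ℝ} {lam : ℝ} (hS₁ : S₁ = As + G * A⁻¹ * Gᵀ)
    (hS₂ : S₂ = B * S₁⁻¹ * Bᵀ) (hA : IsUnit A) (hS₁u : IsUnit S₁) (hS₂u : IsUnit S₂)
    (h₁ : lam ≠ 1) (h₂ : lam ≠ -1) (h₃ : (lam + 1) * lam ≠ 1) {v : m ⊕ (p ⊕ q) → ℝ}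
    (hv : ((blk3 A 0 0 0 S₁ 0 0 0 S₂)⁻¹ * blk3 A Gᵀ 0 G (-As) Bᵀ 0 B 0) *ᵥ v = lam • v)
    (hGy : Gᵀ *ᵥ (fun i => v (Sum.inr (Sum.inl i))) = 0) : v = 0 := by
  obtain ⟨x, y, z, rfl⟩ : ∃ x y z, v = Sum.elim x (Sum.elim y z) :=
    ⟨_, _, _, by rw [Sum.elim_comp_inl_inr, Sum.elim_comp_inl_inr]⟩
  rw [inv_mul_mulVec_eq_smul_iff (isUnit_blk3_diagonal hA hS₁u hS₂u), blk3_mulVec_sumElim,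
    blk3_mulVec_sumElim] at hv
  simp only [Sum.smul_elim, Sum.elim_eq_iff, zero_mulVec, add_zero, zero_add] at hv
  obtain ⟨ex, ey, ez⟩ := hv
  obtain ⟨rfl, rfl, rfl⟩ :=
    eq_zero_of_doubleSaddlePoint_eigen hS₁ hS₂ hA hS₁u hS₂u h₁ h₂ h₃ ex ey ez hGy
  simp only [Sum.elim_zero_zero]

theorem add_one_mul_self_ne_one {x : ℝ} (hp : x ≠ (-1 + Real.sqrt 5) / 2)
    (hm : x ≠ (-1 - Real.sqrt 5) / 2) : (x + 1) * x ≠ 1 := by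
  intro h
  have h5 : Real.sqrt 5 ^ 2 = 5 := Real.sq_sqrt (by norm_num)
  have hroots : (2 * x + 1 - Real.sqrt 5) * (2 * x + 1 + Real.sqrt 5) = 0 := by
    linear_combination 4 * h - h5
  rcases mul_eq_zero.1 hroots with h' | h'
  · exact hp (by linarith)
  · exact hm (by linarith)

theorem stmt12_general (m p q : ℕ)
    (A : Matrix (Fin m) (Fin m) ℝ) (As : Matrix (Fin p) (Fin p) ℝ)
    (G : Matrix (Fin p) (Fin m) ℝ) (B : Matrix (Fin q) (Fin p) ℝ)
    (S1 : Matrix (Fin p) (Fin p) ℝ) (S2 : Matrix (Fin q) (Fin q) ℝ)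
    (hS1def : S1 = As + G * A⁻¹ * Gᵀ) (hS2def : S2 = B * S1⁻¹ * Bᵀ)
    (hA : IsUnit A) (hS1 : IsUnit S1) (hS2 : IsUnit S2)
    (K M1 : Matrix (Fin m ⊕ (Fin p ⊕ Fin q)) (Fin m ⊕ (Fin p ⊕ Fin q)) ℝ)
    (hK : K = blk3 A Gᵀ 0 G (-As) Bᵀ 0 B 0)
    (hM1 : M1 = blk3 A 0 0 0 S1 0 0 0 S2)
    (lam : ℝ)
    (h1 : lam ≠ 1) (h2 : lam ≠ -1)
    (h3 : lam ≠ (-1 + Real.sqrt 5) / 2) (h4 : lam ≠ (-1 - Real.sqrt 5) / 2) :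
    (∀ v : Fin m ⊕ (Fin p ⊕ Fin q) → ℝ, v ≠ 0 → (M1⁻¹ * K) *ᵥ v = lam • v →
      Gᵀ *ᵥ (fun i => v (Sum.inr (Sum.inl i))) ≠ 0) ∧
    Module.finrank ℝ (LinearMap.ker (M1⁻¹ * K - lam • 1).mulVecLin) ≤ G.rank ∧
    (∀ mu : ℝ, 1 < mu →
      Module.finrank ℝ (LinearMap.ker (M1⁻¹ * K - mu • 1).mulVecLin) ≤ G.rank) ∧
    (∀ mu : ℝ, 0 < mu → mu < 1 → mu ≠ (-1 + Real.sqrt 5) / 2 →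
      Module.finrank ℝ (LinearMap.ker (M1⁻¹ * K - mu • 1).mulVecLin) ≤ G.rank) := by
  have eigvec_eq_zero (mu : ℝ) (h₁ : mu ≠ 1) (h₂ : mu ≠ -1) (h₃ : (mu + 1) * mu ≠ 1)
      (v : Fin m ⊕ (Fin p ⊕ Fin q) → ℝ) (hv : (M1⁻¹ * K) *ᵥ v = mu • v)
      (hGy : Gᵀ *ᵥ (fun i => v (Sum.inr (Sum.inl i))) = 0) : v = 0 := by
    subst hK hM1
    exact doubleSaddlePoint_eigvec_eq_zero hS1def hS2def hA hS1 hS2 h₁ h₂ h₃ hv hGy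
  have multiplicity_le (mu : ℝ) (h₁ : mu ≠ 1) (h₂ : mu ≠ -1) (h₃ : (mu + 1) * mu ≠ 1) :
      Module.finrank ℝ (LinearMap.ker (M1⁻¹ * K - mu • 1).mulVecLin) ≤ G.rank :=
    G.rank_transpose ▸ finrank_ker_sub_smul_one_le_rank _ mu Gᵀ
      (LinearMap.funLeft ℝ ℝ (Sum.inr ∘ Sum.inl)) (eigvec_eq_zero mu h₁ h₂ h₃)
  have hlam := add_one_mul_self_ne_one h3 h4
  refine ⟨fun v hv0 hv hGy => hv0 (eigvec_eq_zero lam h1 h2 hlam v hv hGy),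
    multiplicity_le lam h1 h2 hlam,
    fun mu hmu => multiplicity_le mu hmu.ne' (by linarith) (by nlinarith),
    fun mu hmu₀ hmu₁ hmu => multiplicity_le mu hmu₁.ne (by linarith) ?_⟩
  have hneg : (-1 - Real.sqrt 5) / 2 < mu := by linarith [Real.sqrt_nonneg 5]
  exact add_one_mul_self_ne_one hmu hneg.ne'

/-- if `λ` is a real eigenvalue of `M₁⁻¹K` different from `1`,
`−1`, `(−1+√5)/2` and `(−1−√5)/2`, then every eigenvector `(x, y, z)` for `λ`
satisfies `Gᵀ y ≠ 0`, and the geometric multiplicity of `λ` is at most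
`rank G`. In particular every real eigenvalue `λ > 1`, and every real
eigenvalue `λ ∈ (0,1)` with `λ ≠ (−1+√5)/2`, has geometric multiplicity at
most `rank G`. -/
theorem stmt12 (m p q : ℕ)
    (A : Matrix (Fin m) (Fin m) ℝ) (As : Matrix (Fin p) (Fin p) ℝ)
    (G : Matrix (Fin p) (Fin m) ℝ) (B : Matrix (Fin q) (Fin p) ℝ)
    (S1 : Matrix (Fin p) (Fin p) ℝ) (S2 : Matrix (Fin q) (Fin q) ℝ)
    (hS1def : S1 = As + G * A⁻¹ * Gᵀ) (hS2def : S2 = B * S1⁻¹ * Bᵀ)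
    (hA : IsUnit A) (hS1 : IsUnit S1) (hS2 : IsUnit S2)
    (K M1 : Matrix (Fin m ⊕ (Fin p ⊕ Fin q)) (Fin m ⊕ (Fin p ⊕ Fin q)) ℝ)
    (hK : K = blk3 A Gᵀ 0 G (-As) Bᵀ 0 B 0)
    (hM1 : M1 = blk3 A 0 0 0 S1 0 0 0 S2)
    (lam : ℝ)
    (hev : ∃ v : Fin m ⊕ (Fin p ⊕ Fin q) → ℝ, v ≠ 0 ∧ (M1⁻¹ * K) *ᵥ v = lam • v)
    (h1 : lam ≠ 1) (h2 : lam ≠ -1)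
    (h3 : lam ≠ (-1 + Real.sqrt 5) / 2) (h4 : lam ≠ (-1 - Real.sqrt 5) / 2) :
    (∀ v : Fin m ⊕ (Fin p ⊕ Fin q) → ℝ, v ≠ 0 → (M1⁻¹ * K) *ᵥ v = lam • v →
      Gᵀ *ᵥ (fun i => v (Sum.inr (Sum.inl i))) ≠ 0) ∧
    Module.finrank ℝ (LinearMap.ker (M1⁻¹ * K - lam • 1).mulVecLin) ≤ G.rank ∧
    (∀ mu : ℝ, 1 < mu →
      Module.finrank ℝ (LinearMap.ker (M1⁻¹ * K - mu • 1).mulVecLin) ≤ G.rank) ∧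
    (∀ mu : ℝ, 0 < mu → mu < 1 → mu ≠ (-1 + Real.sqrt 5) / 2 →
      Module.finrank ℝ (LinearMap.ker (M1⁻¹ * K - mu • 1).mulVecLin) ≤ G.rank) :=
  stmt12_general m p q A As G B S1 S2 hS1def hS2def hA hS1 hS2 K M1 hK hM1 lam h1 h2 h3 h4
end
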